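/- For all n ≥ 1, the number of 132-avoiding permutations of length n that also avoid the increasing pattern 123 (i.e. contain no increasing subsequence of length 3) equals 2^{n−1}. -/
import Mathlib


def Avoids132 {n : ℕ} (π : Fin n → Fin n) : Prop :=
  ¬ ∃ i j k : Fin n, i < j ∧ j < k ∧ π i < π k ∧ π k < π j

def Avoids123 {n : ℕ} (π : Fin n → Fin n) : Prop :=
  ¬ ∃ i j k : Fin n, i < j ∧ j < k ∧ π i < π j ∧ π j < π k

open Equiv Finset in


def insEquiv (n : ℕ) : Fin (n+1) × Equiv.Perm (Fin n) ≃ Equiv.Perm (Fin (n+1)) where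
  toFun x := (finSuccEquiv n).trans (x.2.optionCongr.trans (finSuccEquiv' x.1).symm)
  invFun π := (π 0, Equiv.removeNone ((finSuccEquiv n).symm.trans (π.trans (finSuccEquiv' (π 0)))))
  left_inv := by
    rintro ⟨p, σ⟩
    have h0 : ((finSuccEquiv n).trans (σ.optionCongr.trans (finSuccEquiv' p).symm)) 0 = p := by
      simp [finSuccEquiv_zero, finSuccEquiv'_symm_none]
    refine Prod.ext h0 ?_
    have key : (finSuccEquiv n).symm.trans
        (((finSuccEquiv n).trans (σ.optionCongr.trans (finSuccEquiv' p).symm)).trans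
          (finSuccEquiv' (((finSuccEquiv n).trans (σ.optionCongr.trans (finSuccEquiv' p).symm)) 0)))
        = σ.optionCongr := by
      rw [h0]
      ext x
      simp
    simp only [key, Equiv.removeNone_optionCongr]
  right_inv := by
    intro π
    set τ := (finSuccEquiv n).symm.trans (π.trans (finSuccEquiv' (π 0))) with hτ
    have hnone : τ none = none := by
      simp [hτ, finSuccEquiv_zero]
    have hoc : (Equiv.removeNone τ).optionCongr = τ := by
      apply Equiv.ext
      intro o
      cases o with
      | none => simp [hnone]
      | some a =>
        have hne : τ (some a) ≠ none := by
          intro h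
          have := τ.injective (h.trans hnone.symm)
          simp at this
        obtain ⟨b, hb⟩ := Option.ne_none_iff_exists'.mp hne
        rw [Equiv.optionCongr_apply, Option.map_some]
        exact Equiv.removeNone_some τ ⟨b, hb⟩
    simp only [hoc]
    ext x
    simp [hτ]

theorem insEquiv_zero (n : ℕ) (p : Fin (n+1)) (σ : Equiv.Perm (Fin n)) :
    insEquiv n (p, σ) 0 = p := by
  simp [insEquiv, finSuccEquiv_zero, finSuccEquiv'_symm_none]

theorem insEquiv_succ (n : ℕ) (p : Fin (n+1)) (σ : Equiv.Perm (Fin n)) (i : Fin n) :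
    insEquiv n (p, σ) i.succ = p.succAbove (σ i) := by
  simp [insEquiv, finSuccEquiv_succ, finSuccEquiv'_symm_some]

open Equiv Finset in
section
open Equiv Finset


def CondS (n : ℕ) (π : Equiv.Perm (Fin n)) : Prop := ∀ i : Fin n, n ≤ (π i : ℕ) + (i : ℕ) + 2

theorem cond_ins (n : ℕ) (p : Fin (n+1)) (σ : Equiv.Perm (Fin n)) :
    CondS (n+1) (insEquiv n (p, σ)) ↔ (n - 1 ≤ (p : ℕ) ∧ CondS n σ) := by
  constructor
  · intro h
    have h0 := h 0
    rw [insEquiv_zero] at h0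
    simp only [Fin.val_zero] at h0
    have hp : n - 1 ≤ (p : ℕ) := by omega
    refine ⟨hp, fun i => ?_⟩
    have hi := h i.succ
    rw [insEquiv_succ] at hi
    simp only [Fin.val_succ] at hi
    rcases Nat.lt_or_ge ((σ i : ℕ)) ((p : ℕ)) with hlt | hge
    · rw [Fin.succAbove_of_castSucc_lt _ _ (by rwa [Fin.lt_def, Fin.coe_castSucc])] at hi
      rw [Fin.coe_castSucc] at hi
      omega
    · omega
  · rintro ⟨hp, hσ⟩ i
    have hpn : (p : ℕ) < n + 1 := p.isLt
    refine Fin.cases ?_ ?_ i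
    · rw [insEquiv_zero]
      simp only [Fin.val_zero]
      omega
    · intro j
      rw [insEquiv_succ]
      have hj := hσ j
      simp only [Fin.val_succ]
      rcases Nat.lt_or_ge ((σ j : ℕ)) ((p : ℕ)) with hlt | hge
      · rw [Fin.succAbove_of_castSucc_lt _ _ (by rwa [Fin.lt_def, Fin.coe_castSucc])]
        rw [Fin.coe_castSucc]
        omega
      · rw [Fin.succAbove_of_le_castSucc _ _ (by rwa [Fin.le_def, Fin.coe_castSucc])]
        rw [Fin.val_succ]
        omega

theorem cardS : ∀ n : ℕ, 1 ≤ n →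
    Nat.card {π : Equiv.Perm (Fin n) // CondS n π} = 2 ^ (n - 1) := by
  intro n
  induction n with
  | zero => omega
  | succ m ih =>
    intro _
    rcases Nat.eq_zero_or_pos m with hm | hm
    · subst hm
      have hall : ∀ π : Equiv.Perm (Fin 1), CondS 1 π := by
        intro π i; omega
      rw [Nat.card_congr (Equiv.subtypeUnivEquiv hall)]
      simp [Nat.card_eq_fintype_card]
    · have e : {x : Fin (m+1) × Equiv.Perm (Fin m) // m - 1 ≤ (x.1 : ℕ) ∧ CondS m x.2} ≃
          {π : Equiv.Perm (Fin (m+1)) // CondS (m+1) π} :=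
        Equiv.subtypeEquiv (insEquiv m)
          (fun x => by obtain ⟨p, σ⟩ := x; exact (cond_ins m p σ).symm)
      rw [← Nat.card_congr e, Nat.card_congr (Equiv.subtypeProdEquivProd (p := fun p : Fin (m+1) => m - 1 ≤ (p : ℕ)) (q := CondS m)), Nat.card_prod]
      have hcard : Nat.card {p : Fin (m+1) // m - 1 ≤ (p : ℕ)} = 2 := by
        rw [Nat.card_eq_fintype_card, Fintype.card_subtype]
        have hset : univ.filter (fun p : Fin (m+1) => m - 1 ≤ (p : ℕ)) =
            Finset.Ici (⟨m - 1, by omega⟩ : Fin (m+1)) := by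
          ext q
          simp [Finset.mem_Ici, Fin.le_def]
        rw [hset, Fin.card_Ici]
        simp
        omega
      rw [hcard, ih hm]
      have h2 : m - 1 + 1 = m := Nat.sub_add_cancel hm
      calc 2 * 2 ^ (m - 1) = 2 ^ (m - 1 + 1) := by rw [pow_succ]; ring
        _ = 2 ^ (m + 1 - 1) := by rw [h2]; congr 1



theorem no_two {n : ℕ} (π : Equiv.Perm (Fin n)) (h : ∀ i : Fin n, n ≤ (π i : ℕ) + (i : ℕ) + 2) :
    ¬ ∃ i j k : Fin n, i < j ∧ j < k ∧ π i < π j ∧ π i < π k := by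
  rintro ⟨i, j, k, hij, hjk, h1, h2⟩
  set v : Fin n := π i with hv
  have hvn : (v : ℕ) < n := v.isLt
  have hn1 : 1 ≤ n := Nat.pos_of_ne_zero (by rintro rfl; exact i.elim0)
  set t : ℕ := n - 2 - (v : ℕ) with ht
  have htn : t < n := by omega
  set A : Finset (Fin n) := univ.filter (fun m : Fin n => π m ≤ v) with hA
  have hAcard : A.card = (v : ℕ) + 1 := by
    have himg : A = (Finset.Iic v).image ⇑π.symm := by
      ext m
      simp only [hA, Finset.mem_filter, Finset.mem_univ, true_and, Finset.mem_image,
        Finset.mem_Iic]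
      constructor
      · intro hm; exact ⟨π m, hm, π.symm_apply_apply m⟩
      · rintro ⟨w, hw, rfl⟩; simpa using hw
    rw [himg, Finset.card_image_of_injective _ π.symm.injective, Fin.card_Iic]
  set R : Finset (Fin n) := univ.filter (fun m : Fin n => t ≤ (m : ℕ)) with hR
  have hRcard : R.card = n - t := by
    have : R = Finset.Ici (⟨t, htn⟩ : Fin n) := by
      ext q; simp [hR, Finset.mem_Ici, Fin.le_def]
    rw [this, Fin.card_Ici]
  have hAR : A ⊆ R := by
    intro m hm
    simp only [hA, Finset.mem_filter, Finset.mem_univ, true_and] at hm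
    simp only [hR, Finset.mem_filter, Finset.mem_univ, true_and]
    have hmle : (π m : ℕ) ≤ (v : ℕ) := hm
    have := h m
    omega
  have hti : t ≤ (i : ℕ) := by
    have := h i
    rw [← hv] at this
    omega
  have hjR : j ∈ R := by
    simp only [hR, Finset.mem_filter, Finset.mem_univ, true_and]
    have : (i : ℕ) < (j : ℕ) := hij
    omega
  have hkR : k ∈ R := by
    simp only [hR, Finset.mem_filter, Finset.mem_univ, true_and]
    have h1' : (i : ℕ) < (j : ℕ) := hij
    have h2' : (j : ℕ) < (k : ℕ) := hjk
    omega
  have hjA : j ∉ A := by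
    simp only [hA, Finset.mem_filter, Finset.mem_univ, true_and, not_le]
    exact h1
  have hkA : k ∉ A := by
    simp only [hA, Finset.mem_filter, Finset.mem_univ, true_and, not_le]
    exact h2
  have hjk' : j ≠ k := ne_of_lt hjk
  have hsub : insert j (insert k A) ⊆ R := by
    intro x hx
    rcases Finset.mem_insert.mp hx with rfl | hx
    · exact hjR
    rcases Finset.mem_insert.mp hx with rfl | hx
    · exact hkR
    · exact hAR hx
  have hcard2 : (insert j (insert k A)).card = A.card + 2 := by
    rw [Finset.card_insert_of_notMem (by simp [hjk', hjA]),
      Finset.card_insert_of_notMem hkA]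
  have hle := Finset.card_le_card hsub
  omega

theorem char_av {n : ℕ} (π : Equiv.Perm (Fin n)) :
    (Avoids132 ⇑π ∧ Avoids123 ⇑π) ↔ ∀ i : Fin n, n ≤ (π i : ℕ) + (i : ℕ) + 2 := by
  constructor
  · rintro ⟨hav132, hav123⟩
    by_contra hcon
    push_neg at hcon
    obtain ⟨i, hi⟩ := hcon
    set U : Finset (Fin n) := univ.filter (fun m : Fin n => π i < π m) with hU
    have hUcard : U.card = n - 1 - (π i : ℕ) := by
      have himg : U = (Finset.Ioi (π i)).image ⇑π.symm := by
        ext m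
        simp only [hU, Finset.mem_filter, Finset.mem_univ, true_and, Finset.mem_image,
          Finset.mem_Ioi]
        constructor
        · intro hm; exact ⟨π m, hm, π.symm_apply_apply m⟩
        · rintro ⟨w, hw, rfl⟩; simpa using hw
      rw [himg, Finset.card_image_of_injective _ π.symm.injective, Fin.card_Ioi]
    have hsplit := Finset.card_filter_add_card_filter_not
      (s := U) (p := fun m => i < m)
    have hneg : (U.filter (fun m => ¬ i < m)).card ≤ (i : ℕ) := by
      have hsub2 : U.filter (fun m => ¬ i < m) ⊆ Finset.Iio i := by
        intro m hm
        simp only [hU, Finset.mem_filter, Finset.mem_univ, true_and, not_lt] at hm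
        obtain ⟨hlt, hle⟩ := hm
        rcases lt_or_eq_of_le hle with hmi | rfl
        · exact Finset.mem_Iio.mpr hmi
        · exact absurd hlt (lt_irrefl _)
      calc (U.filter (fun m => ¬ i < m)).card ≤ (Finset.Iio i).card :=
            Finset.card_le_card hsub2
        _ = (i : ℕ) := Fin.card_Iio i
    have hT : 1 < (U.filter (fun m => i < m)).card := by
      have hv : (π i : ℕ) < n := (π i).isLt
      omega
    obtain ⟨a, ha, b, hb, hab⟩ := Finset.one_lt_card.mp hT
    simp only [hU, Finset.mem_filter, Finset.mem_univ, true_and] at ha hb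
    obtain ⟨hpa, hia⟩ := ha
    obtain ⟨hpb, hib⟩ := hb
    have key : ∀ x y : Fin n, i < x → i < y → x < y → π i < π x → π i < π y → False := by
      intro x y hix hiy hxy hpx hpy
      rcases lt_trichotomy (π x) (π y) with hc | hc | hc
      · exact hav123 ⟨i, x, y, hix, hxy, hpx, hc⟩
      · exact absurd (π.injective hc) (ne_of_lt hxy)
      · exact hav132 ⟨i, x, y, hix, hxy, hpy, hc⟩
    rcases lt_or_gt_of_ne hab with h' | h'
    · exact key a b hia hib h' hpa hpb
    · exact key b a hib hia h' hpb hpa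
  · intro h
    have hno := no_two π h
    constructor
    · rintro ⟨i, j, k, hij, hjk, h1, h2⟩
      exact hno ⟨i, j, k, hij, hjk, lt_trans h1 h2, h1⟩
    · rintro ⟨i, j, k, hij, hjk, h1, h2⟩
      exact hno ⟨i, j, k, hij, hjk, h1, lt_trans h1 h2⟩

end

theorem count_av132_123 (n : ℕ) (hn : 1 ≤ n) :
    Nat.card {π : Equiv.Perm (Fin n) // Avoids132 ⇑π ∧ Avoids123 ⇑π} =
      2 ^ (n - 1) := by
  have e : {π : Equiv.Perm (Fin n) // Avoids132 ⇑π ∧ Avoids123 ⇑π} ≃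
      {π : Equiv.Perm (Fin n) // CondS n π} :=
    Equiv.subtypeEquivRight (fun π => char_av π)
  rw [Nat.card_congr e, cardS n hn]
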